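/- arXiv:1107.5646 — 6 statements merged into one kernel-verified Lean document; each statement's English description precedes it below -/
import Mathlib

section
/- Every maximal subgraph is a valid temporal subgraph: if E*_max is an equivalence class of the Δt-connectivity relation on a finite event set E, then E*_max is Δt-connected and for each node all Δt-connected events of that node occurring within E*_max's time span are contained in E*_max (no events can be skipped). -/
/-- An event `(n₁, n₂, t, δ)` connects nodes `n₁ → n₂` during `[t, t+δ]`. -/
structure Event where
  n1 : ℕ
  n2 : ℕ
  t : ℝ
  δ : ℝ

/-- Two events share at least one node. -/
def sharesNode (e f : Event) : Prop :=
  e.n1 = f.n1 ∨ e.n1 = f.n2 ∨ e.n2 = f.n1 ∨ e.n2 = f.n2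

/-- Two events are Δt-adjacent if they share a node and the time gap between
the end of the earlier event and the start of the later one is at most Δt. -/
def adjacent (Δt : ℝ) (e f : Event) : Prop :=
  sharesNode e f ∧ f.t - (e.t + e.δ) ≤ Δt ∧ e.t - (f.t + f.δ) ≤ Δt

/-- Δt-connectivity within a set of events: joined by a sequence of
consecutively Δt-adjacent events, all lying in the set. -/
def connectedIn (Δt : ℝ) (E : Set Event) (e f : Event) : Prop :=
  Relation.ReflTransGen (fun a b => a ∈ E ∧ b ∈ E ∧ adjacent Δt a b) e f

/-- Event `e` involves node `v`. -/
def hasNode (e : Event) (v : ℕ) : Prop :=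
  e.n1 = v ∨ e.n2 = v

attribute [local instance] Classical.propDecidable

/-! The class of `e` is closed under adjacency within `E`, and a path in `E` that starts
in a set closed under adjacency never leaves it, so it is a path inside that set. Applied
to a path through `e` this makes the class connected within itself; applied to a path
from a member of the class it shows that no event reachable from the class, in its time
span or not, is missing from it. -/

theorem adjacent.symm {Δt : ℝ} {a b : Event} (h : adjacent Δt a b) : adjacent Δt b a := by
  obtain ⟨hs, h1, h2⟩ := h
  refine ⟨?_, h2, h1⟩
  unfold sharesNode at *
  tauto

theorem connectedIn.symm {Δt : ℝ} {E : Set Event} {a b : Event} (h : connectedIn Δt E a b) :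
    connectedIn Δt E b a :=
  have : Std.Symm fun x y => x ∈ E ∧ y ∈ E ∧ adjacent Δt x y :=
    ⟨fun _ _ ⟨hx, hy, hxy⟩ => ⟨hy, hx, hxy.symm⟩⟩
  Std.Symm.symm (r := Relation.ReflTransGen _) _ _ h

theorem connectedIn.restrict_of_closed {Δt : ℝ} {E S : Set Event} {a b : Event}
    (hS : ∀ x ∈ S, ∀ y ∈ E, adjacent Δt x y → y ∈ S)
    (h : connectedIn Δt E a b) (ha : a ∈ S) :
    b ∈ S ∧ connectedIn Δt S a b := by
  induction h with
  | refl => exact ⟨ha, .refl⟩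
  | tail _ hstep ih =>
    obtain ⟨_, hyE, hxy⟩ := hstep
    obtain ⟨hxS, hax⟩ := ih
    have hyS := hS _ hxS _ hyE hxy
    exact ⟨hyS, hax.tail ⟨hxS, hyS, hxy⟩⟩

theorem maximal_subgraph_is_valid_general (Δt : ℝ) (E : Finset Event) (e : Event)
    (M : Finset Event)
    (hM : M = E.filter (fun f => connectedIn Δt (↑E : Set Event) e f)) :
    (∀ a ∈ M, ∀ b ∈ M, connectedIn Δt (↑M : Set Event) a b) ∧
    (∀ v : ℕ, ∀ a ∈ M, ∀ b ∈ M, ∀ m ∈ E,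
      hasNode a v → hasNode m v → hasNode b v →
      connectedIn Δt (↑E : Set Event) a m →
      a.t < m.t → m.t < b.t → m ∈ M) := by
  have hmem : ∀ {f}, f ∈ M ↔ f ∈ E ∧ connectedIn Δt E e f := by
    intro f
    rw [hM, Finset.mem_filter]
  have hclosed : ∀ x ∈ (M : Set Event), ∀ y ∈ (E : Set Event),
      adjacent Δt x y → y ∈ (M : Set Event) :=
    fun x hx y hy hxy => hmem.2 ⟨hy, (hmem.1 hx).2.tail ⟨(hmem.1 hx).1, hy, hxy⟩⟩
  constructor
  · intro a ha b hb
    have hab : connectedIn Δt E a b := (hmem.1 ha).2.symm.trans (hmem.1 hb).2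
    exact (hab.restrict_of_closed hclosed ha).2
  · intro _ a ha _ _ m _ _ _ _ ham _ _
    exact (ham.restrict_of_closed hclosed ha).1

/-- Every maximal subgraph (equivalence class of Δt-connectivity on a finite
event set `E`) is a valid temporal subgraph: it is Δt-connected, and for each
node, any Δt-connected event of that node lying within the class's time span
is contained in the class (no events are skipped). -/
theorem maximal_subgraph_is_valid (Δt : ℝ) (E : Finset Event) (e : Event) (he : e ∈ E)
    (M : Finset Event)
    (hM : M = E.filter (fun f => connectedIn Δt (↑E : Set Event) e f)) :
    (∀ a ∈ M, ∀ b ∈ M, connectedIn Δt (↑M : Set Event) a b) ∧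
    (∀ v : ℕ, ∀ a ∈ M, ∀ b ∈ M, ∀ m ∈ E,
      hasNode a v → hasNode m v → hasNode b v →
      connectedIn Δt (↑E : Set Event) a m →
      a.t < m.t → m.t < b.t → m ∈ M) :=
  maximal_subgraph_is_valid_general Δt E e M hM
end

section
/- The converse of the previous statement fails in general: there exists a maximal subgraph E*_max (a concrete event set may be constructed, e.g., three events e_1, e_2, e_3 all involving a common node c with e_2 between e_1 and e_3 in time, all pairwise Δt-adjacent, where e_1 and e_3 also share a second node) and a connected subgraph of G(E*_max) (namely {e_1, e_3}) whose event set is not a valid temporal subgraph. -/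
namespace Event

variable {e f m : Event} {v : ℕ}

theorem sharesNode_of_hasNode (he : hasNode e v) (hf : hasNode f v) : sharesNode e f := by
  unfold sharesNode
  rcases he with he | he <;> rcases hf with hf | hf <;> simp [he, hf]

theorem adjacent_of_hasNode {Δt : ℝ} (he : hasNode e v) (hf : hasNode f v)
    (heδ : 0 ≤ e.δ) (hfδ : 0 ≤ f.δ) (hΔt : |e.t - f.t| ≤ Δt) : adjacent Δt e f := by
  have hle := abs_le.mp hΔt
  exact ⟨sharesNode_of_hasNode he hf, by linarith, by linarith⟩

def ConsecutiveAt (M : Set Event) (e f : Event) (v : ℕ) : Prop :=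
  ∀ m ∈ M, hasNode m v → ¬(min e.t f.t < m.t ∧ m.t < max e.t f.t)

theorem consecutiveAt_triple (hm : ¬hasNode m v) : ConsecutiveAt {e, m, f} e f v := by
  rintro x (rfl | rfl | rfl) hx ⟨hgt, hlt⟩
  · rw [min_lt_iff, lt_self_iff_false, false_or] at hgt
    rw [lt_max_iff, lt_self_iff_false, false_or] at hlt
    exact hgt.asymm hlt
  · exact hm hx
  · rw [min_lt_iff, lt_self_iff_false, or_false] at hgt
    rw [lt_max_iff, lt_self_iff_false, or_false] at hlt
    exact hgt.asymm hlt

def IsValidTemporalSubgraph (M S : Set Event) : Prop :=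
  ∀ v : ℕ, ∀ a ∈ S, ∀ b ∈ S, hasNode a v → hasNode b v →
    ∀ m ∈ M, hasNode m v → a.t < m.t → m.t < b.t → m ∈ S

theorem not_isValidTemporalSubgraph_of_between {M S : Set Event} {a b : Event}
    (ha : a ∈ S) (hb : b ∈ S) (hm : m ∈ M) (hmS : m ∉ S)
    (hav : hasNode a v) (hbv : hasNode b v) (hmv : hasNode m v)
    (ham : a.t < m.t) (hmb : m.t < b.t) : ¬IsValidTemporalSubgraph M S :=
  fun H => hmS (H v a ha b hb hav hbv m hm hmv ham hmb)

end Event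

open Event

/-- The converse of the previous statement fails: there is a maximal subgraph
`M = {e₁, e₂, e₃}` (all events at a common node `c`, `e₂` between `e₁` and `e₃`
in time, all pairwise Δt-adjacent, with `e₁` and `e₃` also sharing a second
node `v ≠ c`) such that `{e₁, e₃}` spans a connected subgraph of `G(M)` (indeed
`e₁ e₃` is an edge of `G(M)`) but is not a valid temporal subgraph (omitting
`e₂` violates consecutiveness at node `c`). -/
theorem event_graph_converse_fails :
    ∃ (Δt : ℝ) (e1 e2 e3 : Event) (c : ℕ),
      e1 ≠ e2 ∧ e2 ≠ e3 ∧ e1 ≠ e3 ∧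
      hasNode e1 c ∧ hasNode e2 c ∧ hasNode e3 c ∧
      e1.t < e2.t ∧ e2.t < e3.t ∧
      adjacent Δt e1 e2 ∧ adjacent Δt e2 e3 ∧ adjacent Δt e1 e3 ∧
      (∃ v : ℕ, v ≠ c ∧ hasNode e1 v ∧ hasNode e3 v ∧ ¬ hasNode e2 v) ∧
      -- `e₁ e₃` is an edge of G(M): Δt-adjacent and consecutive at a shared node
      (∃ v : ℕ, hasNode e1 v ∧ hasNode e3 v ∧
        ∀ m ∈ ({e1, e2, e3} : Set Event), hasNode m v →
          ¬((min e1.t e3.t < m.t) ∧ (m.t < max e1.t e3.t))) ∧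
      -- but `{e₁, e₃}` is not a valid temporal subgraph within M
      ¬(∀ v : ℕ, ∀ a ∈ ({e1, e3} : Set Event), ∀ b ∈ ({e1, e3} : Set Event),
          hasNode a v → hasNode b v →
          ∀ m ∈ ({e1, e2, e3} : Set Event), hasNode m v →
          a.t < m.t → m.t < b.t → m ∈ ({e1, e3} : Set Event)) := by
  let e1 : Event := ⟨0, 1, 0, 0⟩
  let e2 : Event := ⟨0, 2, 1, 0⟩
  let e3 : Event := ⟨0, 1, 2, 0⟩
  have h12 : e1 ≠ e2 := ne_of_apply_ne Event.t (by norm_num)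
  have h23 : e2 ≠ e3 := ne_of_apply_ne Event.t (by norm_num)
  have h2v : ¬hasNode e2 1 := by simp [hasNode, e2]
  have h2S : e2 ∉ ({e1, e3} : Set Event) := by
    rintro (h | h)
    exacts [h12 h.symm, h23 h]
  have hadj {e f : Event} (he : hasNode e 0) (hf : hasNode f 0) (hδe : e.δ = 0) (hδf : f.δ = 0)
      (ht : |e.t - f.t| ≤ 2) : adjacent 2 e f :=
    adjacent_of_hasNode he hf hδe.ge hδf.ge ht
  refine ⟨2, e1, e2, e3, 0, h12, h23, ne_of_apply_ne Event.t (by norm_num),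
    .inl rfl, .inl rfl, .inl rfl, by norm_num [e1, e2], by norm_num [e2, e3],
    hadj (.inl rfl) (.inl rfl) rfl rfl (by norm_num [e1, e2, abs_le]),
    hadj (.inl rfl) (.inl rfl) rfl rfl (by norm_num [e2, e3, abs_le]),
    hadj (.inl rfl) (.inl rfl) rfl rfl (by norm_num [e1, e3, abs_le]),
    ⟨1, one_ne_zero, .inr rfl, .inr rfl, h2v⟩, ⟨1, .inr rfl, .inr rfl, consecutiveAt_triple h2v⟩,
    not_isValidTemporalSubgraph_of_between (v := 0) (.inl rfl) (.inr rfl) (.inr (.inl rfl)) h2S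
      (.inl rfl) (.inl rfl) (.inl rfl) (by norm_num [e1, e2]) (by norm_num [e2, e3])⟩
end

section
/- The algorithm FindConnectedSets enumerates every connected vertex set of a finite undirected graph exactly once: for each vertex i, the search tree rooted at i (which excludes all vertices smaller than i and extends sets only through allowed frontier vertices, excluding at each extension step all frontier vertices smaller than the chosen one) generates precisely the connected vertex sets whose minimum element is i, and generates each such set exactly once. -/
/-- A state of `FindConnectedSets`: the current set `S`, the excluded set `V⁻`,
and the frontier `V⁺`. -/
abbrev FCSState (n : ℕ) := Finset (Fin n) × Finset (Fin n) × Finset (Fin n)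

/-- The root state of the search tree rooted at `i`:
`S = {i}`, `V⁻ = {j : j ≤ i}`, `V⁺ = {j ∈ N(i) : j > i}`. -/
def rootState {n : ℕ} (G : SimpleGraph (Fin n)) [DecidableRel G.Adj] (i : Fin n) :
    FCSState n :=
  ({i}, Finset.univ.filter (fun j => j ≤ i),
    Finset.univ.filter (fun j => G.Adj i j ∧ i < j))

/-- Extending a state with a frontier vertex `i`: the current set becomes
`S ∪ {i}`, the excluded set `V⁻ ∪ {j ∈ V⁺ : j ≤ i}`, and the frontier
`{j ∈ V⁺ : j > i} ∪ {j ∈ N(i) : j not excluded}`. -/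
def stepState {n : ℕ} (G : SimpleGraph (Fin n)) [DecidableRel G.Adj]
    (σ : FCSState n) (i : Fin n) : FCSState n :=
  (insert i σ.1,
   σ.2.1 ∪ σ.2.2.filter (fun j => j ≤ i),
   σ.2.2.filter (fun j => i < j) ∪
     Finset.univ.filter (fun j =>
       G.Adj i j ∧ j ∉ σ.2.1 ∪ σ.2.2.filter (fun j' => j' ≤ i)))

/-- `ReachL G σ l τ`: starting from state `σ` and successively extending with
the frontier vertices listed in `l`, the recursion reaches state `τ`. -/
inductive ReachL {n : ℕ} (G : SimpleGraph (Fin n)) [DecidableRel G.Adj] :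
    FCSState n → List (Fin n) → FCSState n → Prop
  | refl (σ : FCSState n) : ReachL G σ [] σ
  | cons {σ : FCSState n} {i : Fin n} {l : List (Fin n)} {τ : FCSState n} :
      i ∈ σ.2.2 → ReachL G (stepState G σ i) l τ → ReachL G σ (i :: l) τ

/-- A connected vertex set: nonempty, and any two of its vertices are joined
by a path within the set. -/
def connSet {n : ℕ} (G : SimpleGraph (Fin n)) (S : Finset (Fin n)) : Prop :=
  S.Nonempty ∧ ∀ a ∈ S, ∀ b ∈ S,
    Relation.ReflTransGen (fun x y => x ∈ S ∧ y ∈ S ∧ G.Adj x y) a b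

/-!
Along every run of the search rooted at `i`, the state `(S, V⁻, V⁺)` satisfies: `S` is connected
with minimum `i`, `S ⊆ V⁻`, `V⁻` and `V⁺` are disjoint, every vertex `≤ i` lies in `V⁻`, and `V⁺`
consists exactly of the neighbours of `S` outside `V⁻`. This gives soundness. For completeness,
fix a connected target `T` with minimum `i` and descend keeping `T ∩ V⁻ = S`: while `S ≠ T`,
connectivity of `T` puts a vertex of `T` on the frontier, and extending by the smallest such
vertex excludes no other vertex of `T`. For uniqueness, the vertex chosen at a step lies in every
later set, whereas the smaller frontier vertices it excludes never enter a later set; so two runs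
that first differ produce different sets.
-/

open Finset Relation

theorem Relation.ReflTransGen.exists_crossing_step {α : Type*} {r : α → α → Prop}
    {p : α → Prop} {a b : α} (h : ReflTransGen r a b) (ha : p a) (hb : ¬ p b) :
    ∃ x y, r x y ∧ p x ∧ ¬ p y := by
  induction h with
  | refl => exact absurd ha hb
  | @tail c d _ hcd ih =>
    by_cases hc : p c
    · exact ⟨c, d, hcd, hc, hb⟩
    · exact ih hc

section

variable {n : ℕ} {G : SimpleGraph (Fin n)}

theorem connSet_insert {S : Finset (Fin n)} {a v : Fin n} (hS : connSet G S) (ha : a ∈ S)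
    (hav : G.Adj a v) : connSet G (insert v S) := by
  refine ⟨insert_nonempty v S, fun x hx y hy => ?_⟩
  let R x y := x ∈ insert v S ∧ y ∈ insert v S ∧ G.Adj x y
  have lift {x y : Fin n} (hx : x ∈ S) (hy : y ∈ S) : ReflTransGen R x y :=
    ReflTransGen.mono (fun _ _ h => ⟨mem_insert_of_mem h.1, mem_insert_of_mem h.2.1, h.2.2⟩)
      _ _ (hS.2 x hx y hy)
  have via_a : ∀ x ∈ insert v S, ReflTransGen R x a ∧ ReflTransGen R a x := by
    intro x hx
    rcases mem_insert.1 hx with rfl | hx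
    · exact ⟨.single ⟨mem_insert_self _ _, mem_insert_of_mem ha, hav.symm⟩,
        .single ⟨mem_insert_of_mem ha, mem_insert_self _ _, hav⟩⟩
    · exact ⟨lift hx ha, lift ha hx⟩
  exact (via_a x hx).1.trans (via_a y hy).2

structure IsSearchState (G : SimpleGraph (Fin n)) (i : Fin n) (σ : FCSState n) : Prop where
  fst_subset_excluded : σ.1 ⊆ σ.2.1
  disjoint_excluded_frontier : Disjoint σ.2.1 σ.2.2
  mem_excluded_of_le : ∀ j ≤ i, j ∈ σ.2.1
  exists_adj_of_mem_frontier : ∀ j ∈ σ.2.2, ∃ a ∈ σ.1, G.Adj a j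
  mem_frontier_of_adj : ∀ a ∈ σ.1, ∀ j, G.Adj a j → j ∉ σ.2.1 → j ∈ σ.2.2
  connSet_fst : connSet G σ.1
  le_of_mem_fst : ∀ j ∈ σ.1, i ≤ j

variable {i k : Fin n} {σ : FCSState n}

namespace IsSearchState

theorem notMem_excluded (hσ : IsSearchState G i σ) (hk : k ∈ σ.2.2) : k ∉ σ.2.1 :=
  disjoint_right.1 hσ.disjoint_excluded_frontier hk

theorem notMem_fst (hσ : IsSearchState G i σ) (hk : k ∈ σ.2.2) : k ∉ σ.1 :=
  fun h => hσ.notMem_excluded hk (hσ.fst_subset_excluded h)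

theorem exists_mem_frontier_inter (hσ : IsSearchState G i σ) {T : Finset (Fin n)}
    (hT : connSet G T) (hTσ : T ∩ σ.2.1 = σ.1) (hne : ¬ T ⊆ σ.1) : (σ.2.2 ∩ T).Nonempty := by
  have hσT : σ.1 ⊆ T := hTσ ▸ inter_subset_left
  obtain ⟨a, ha⟩ := hσ.connSet_fst.1
  obtain ⟨b, hbT, hb⟩ := not_subset.1 hne
  obtain ⟨x, y, ⟨-, hyT, hxy⟩, hx, hy⟩ :=
    (hT.2 a (hσT ha) b hbT).exists_crossing_step (p := (· ∈ σ.1)) ha hb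
  have hy_excl : y ∉ σ.2.1 := fun h => hy (hTσ ▸ mem_inter.2 ⟨hyT, h⟩)
  exact ⟨y, mem_inter.2 ⟨hσ.mem_frontier_of_adj x hx y hxy hy_excl, hyT⟩⟩

end IsSearchState

variable [DecidableRel G.Adj]

theorem isSearchState_rootState : IsSearchState G i (rootState G i) where
  fst_subset_excluded := by simp [rootState]
  disjoint_excluded_frontier := by
    simp only [rootState, disjoint_left, mem_filter, mem_univ, true_and]
    exact fun _ hj hj' => hj.not_gt hj'.2
  mem_excluded_of_le := by simp [rootState]
  exists_adj_of_mem_frontier := by simp +contextual [rootState]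
  mem_frontier_of_adj := by simp +contextual [rootState]
  connSet_fst :=
    ⟨singleton_nonempty i, fun a ha b hb => by rw [mem_singleton.1 ha, mem_singleton.1 hb]⟩
  le_of_mem_fst := by simp [rootState]

theorem IsSearchState.stepState (hσ : IsSearchState G i σ) (hk : k ∈ σ.2.2) :
    IsSearchState G i (stepState G σ k) where
  fst_subset_excluded := by
    intro x hx
    rcases mem_insert.1 hx with rfl | hx
    · exact mem_union_right _ (mem_filter.2 ⟨hk, le_rfl⟩)
    · exact mem_union_left _ (hσ.fst_subset_excluded hx)
  disjoint_excluded_frontier := by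
    simp only [_root_.stepState, disjoint_left, mem_union, mem_filter, mem_univ, true_and]
    rintro x (hx | ⟨hx, hxk⟩) (⟨hx', hkx⟩ | ⟨-, hx'⟩)
    · exact disjoint_left.1 hσ.disjoint_excluded_frontier hx hx'
    · exact hx' (Or.inl hx)
    · exact hxk.not_gt hkx
    · exact hx' (Or.inr ⟨hx, hxk⟩)
  mem_excluded_of_le j hj := mem_union_left _ (hσ.mem_excluded_of_le j hj)
  exists_adj_of_mem_frontier := by
    simp only [_root_.stepState, mem_union, mem_filter, mem_univ, true_and]
    rintro j (⟨hj, -⟩ | ⟨hkj, -⟩)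
    · obtain ⟨a, ha, haj⟩ := hσ.exists_adj_of_mem_frontier j hj
      exact ⟨a, mem_insert_of_mem ha, haj⟩
    · exact ⟨k, mem_insert_self k σ.1, hkj⟩
  mem_frontier_of_adj := by
    simp only [_root_.stepState, mem_insert, mem_union, mem_filter, mem_univ, true_and, not_or,
      not_and, not_le]
    rintro a (rfl | ha) j haj ⟨hj, hjk⟩
    · exact Or.inr ⟨haj, hj, hjk⟩
    · have hj' := hσ.mem_frontier_of_adj a ha j haj hj
      exact Or.inl ⟨hj', hjk hj'⟩
  connSet_fst := by
    obtain ⟨a, ha, hak⟩ := hσ.exists_adj_of_mem_frontier k hk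
    exact connSet_insert hσ.connSet_fst ha hak
  le_of_mem_fst := by
    have hik : i < k := lt_of_not_ge fun h => hσ.notMem_excluded hk (hσ.mem_excluded_of_le k h)
    intro j hj
    rcases mem_insert.1 hj with rfl | hj
    · exact hik.le
    · exact hσ.le_of_mem_fst j hj

variable {l l' : List (Fin n)} {τ τ' : FCSState n}

namespace ReachL

theorem fst_subset (hr : ReachL G σ l τ) : σ.1 ⊆ τ.1 := by
  induction hr with
  | refl => exact subset_rfl
  | cons _ _ ih => exact (subset_insert _ _).trans ih

theorem head_mem_fst (hr : ReachL G σ (k :: l) τ) : k ∈ τ.1 := by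
  cases hr with
  | cons _ hr => exact hr.fst_subset (mem_insert_self k σ.1)

theorem isSearchState (hr : ReachL G σ l τ) (hσ : IsSearchState G i σ) :
    IsSearchState G i τ := by
  induction hr with
  | refl => exact hσ
  | cons hk _ ih => exact ih (hσ.stepState hk)

theorem notMem_fst (hr : ReachL G σ l τ) (hσ : IsSearchState G i σ) {x : Fin n}
    (hx : x ∈ σ.2.1) (hxσ : x ∉ σ.1) : x ∉ τ.1 := by
  induction hr with
  | refl => exact hxσ
  | @cons σ k _ _ hk _ ih =>
    refine ih (hσ.stepState hk) (mem_union_left _ hx) fun h => ?_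
    rcases mem_insert.1 h with rfl | h
    exacts [hσ.notMem_excluded hk hx, hxσ h]

theorem notMem_fst_of_lt {k' : Fin n} (hr : ReachL G σ (k' :: l) τ) (hσ : IsSearchState G i σ)
    (hk : k ∈ σ.2.2) (hkk' : k < k') : k ∉ τ.1 := by
  cases hr with
  | cons hk' hr =>
    refine hr.notMem_fst (hσ.stepState hk') (mem_union_right _ (mem_filter.2 ⟨hk, hkk'.le⟩))
      fun h => ?_
    rcases mem_insert.1 h with h | h
    exacts [hkk'.ne h, hσ.notMem_fst hk h]

theorem eq_of_fst_eq (hσ : IsSearchState G i σ) (hr : ReachL G σ l τ)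
    (hr' : ReachL G σ l' τ') (h : τ.1 = τ'.1) : l = l' := by
  induction hr generalizing l' with
  | refl σ =>
    cases hr' with
    | refl => rfl
    | cons hk hr' => exact absurd (h ▸ (ReachL.cons hk hr').head_mem_fst) (hσ.notMem_fst hk)
  | @cons σ a l₁ τ ha hr ih =>
    cases hr' with
    | refl => exact absurd (h ▸ (ReachL.cons ha hr).head_mem_fst) (hσ.notMem_fst ha)
    | @cons _ a' _ _ ha' hr' =>
      rcases lt_trichotomy a a' with hlt | rfl | hgt
      · exact absurd (h ▸ (ReachL.cons ha hr).head_mem_fst)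
          ((ReachL.cons ha' hr').notMem_fst_of_lt hσ ha hlt)
      · rw [ih (hσ.stepState ha) hr' h]
      · exact absurd (h.symm ▸ (ReachL.cons ha' hr').head_mem_fst)
          ((ReachL.cons ha hr).notMem_fst_of_lt hσ ha' hgt)

end ReachL

theorem inter_stepState_excluded {T : Finset (Fin n)} {m : Fin n} (hTσ : T ∩ σ.2.1 = σ.1)
    (hm : m ∈ σ.2.2 ∩ T) (hmin : ∀ j ∈ σ.2.2 ∩ T, m ≤ j) :
    T ∩ (stepState G σ m).2.1 = (stepState G σ m).1 := by
  ext j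
  have hjσ := congrArg (j ∈ ·) hTσ
  simp only [mem_inter] at hm hmin hjσ
  simp only [_root_.stepState, mem_inter, mem_union, mem_filter, mem_insert, ← hjσ]
  constructor
  · rintro ⟨hjT, hj | ⟨hj, hjm⟩⟩
    exacts [Or.inr ⟨hjT, hj⟩, Or.inl (hjm.antisymm (hmin j ⟨hj, hjT⟩))]
  · rintro (rfl | ⟨hjT, hj⟩)
    exacts [⟨hm.2, Or.inr ⟨hm.1, le_rfl⟩⟩, ⟨hjT, Or.inl hj⟩]

theorem exists_reachL_of_inter_excluded_eq {σ : FCSState n} (hσ : IsSearchState G i σ)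
    {T : Finset (Fin n)} (hT : connSet G T) (hTσ : T ∩ σ.2.1 = σ.1) :
    ∃ l τ, ReachL G σ l τ ∧ τ.1 = T := by
  by_cases hTS : T ⊆ σ.1
  · exact ⟨[], σ, .refl σ, (hTS.antisymm (hTσ ▸ inter_subset_left)).symm⟩
  obtain ⟨m, hm, hmin⟩ := exists_min_image _ id (hσ.exists_mem_frontier_inter hT hTσ hTS)
  obtain ⟨hmσ, hmT⟩ := mem_inter.1 hm
  have : (T \ insert m σ.1).card < (T \ σ.1).card := by
    rw [sdiff_insert]
    exact card_erase_lt_of_mem (mem_sdiff.2 ⟨hmT, hσ.notMem_fst hmσ⟩)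
  obtain ⟨l, τ, hr, hτ⟩ := exists_reachL_of_inter_excluded_eq (hσ.stepState hmσ) hT
    (inter_stepState_excluded hTσ hm hmin)
  exact ⟨m :: l, τ, .cons hmσ hr, hτ⟩
termination_by (T \ σ.1).card

end

/-- The search tree of `FindConnectedSets` rooted at `i` outputs precisely the
connected vertex sets whose minimum element is `i`, and outputs each exactly
once (the path of the recursion producing a given set is unique). -/
theorem findConnectedSets_correct {n : ℕ} (G : SimpleGraph (Fin n))
    [DecidableRel G.Adj] (i : Fin n) :
    (∀ S : Finset (Fin n),
        (∃ l τ, ReachL G (rootState G i) l τ ∧ τ.1 = S) ↔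
        (connSet G S ∧ i ∈ S ∧ ∀ j ∈ S, i ≤ j)) ∧
    (∀ (l l' : List (Fin n)) (τ τ' : FCSState n),
        ReachL G (rootState G i) l τ → ReachL G (rootState G i) l' τ' →
        τ.1 = τ'.1 → l = l') := by
  have hroot : IsSearchState G i (rootState G i) := isSearchState_rootState
  refine ⟨fun S => ⟨?_, ?_⟩, fun l l' τ τ' hr hr' h => hr.eq_of_fst_eq hroot hr' h⟩
  · rintro ⟨l, τ, hr, rfl⟩
    have hτ := hr.isSearchState hroot
    exact ⟨hτ.connSet_fst, hr.fst_subset (mem_singleton_self i), hτ.le_of_mem_fst⟩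
  · rintro ⟨hS, hiS, hmin⟩
    refine exists_reachL_of_inter_excluded_eq hroot hS ?_
    ext j
    simp only [rootState, mem_inter, mem_filter, mem_univ, true_and, mem_singleton]
    exact ⟨fun ⟨hjS, hji⟩ => hji.antisymm (hmin j hjS), by rintro rfl; exact ⟨hiS, le_rfl⟩⟩
end

section
/- Every connected vertex set S of a finite graph on {1,...,n} with min S = i₁ can be built by repeatedly adding, at each step, a vertex of S adjacent to the current partial set, in such a way that the specific exclusion discipline of FindConnectedSets (excluding frontier vertices smaller than the added vertex) never excludes a vertex of S that is still needed; consequently, the algorithm's output contains S. -/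
theorem Relation.ReflTransGen.exists_boundary_step {α : Type*} {r : α → α → Prop} {p : α → Prop}
    {a b : α} (h : Relation.ReflTransGen r a b) (ha : p a) (hb : ¬ p b) :
    ∃ x y, r x y ∧ p x ∧ ¬ p y := by
  induction h with
  | refl => exact absurd ha hb
  | @tail c d _ hcd ih =>
    by_cases hc : p c
    · exact ⟨c, d, hcd, hc, hb⟩
    · exact ih hc

namespace FindConnectedSets

open Finset

variable {n : ℕ} {G : SimpleGraph (Fin n)} [DecidableRel G.Adj] {S : Finset (Fin n)}
  {σ : FCSState n}

/-- The invariant along the execution path that always adds the least frontier vertex lying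
in `S`. -/
structure OnPathTo (G : SimpleGraph (Fin n)) [DecidableRel G.Adj] (S : Finset (Fin n))
    (σ : FCSState n) : Prop where
  current_nonempty : σ.1.Nonempty
  current_subset : σ.1 ⊆ S
  current_subset_excluded : σ.1 ⊆ σ.2.1
  inter_excluded_subset : S ∩ σ.2.1 ⊆ σ.1
  adj_mem_frontier : ∀ a ∈ σ.1, ∀ j, G.Adj a j → j ∉ σ.2.1 → j ∈ σ.2.2
  disjoint_frontier_excluded : Disjoint σ.2.2 σ.2.1

theorem onPathTo_rootState {i : Fin n} (hi : i ∈ S) (hmin : ∀ j ∈ S, i ≤ j) :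
    OnPathTo G S (rootState G i) where
  current_nonempty := singleton_nonempty i
  current_subset := singleton_subset_iff.2 hi
  current_subset_excluded := by simp [rootState]
  inter_excluded_subset j hj := by
    simp only [rootState, mem_inter, mem_filter, mem_univ, true_and] at hj
    exact mem_singleton.2 (le_antisymm hj.2 (hmin j hj.1))
  adj_mem_frontier a ha j haj hj := by
    simp only [rootState, mem_singleton] at ha
    subst ha
    simpa [rootState, haj] using hj
  disjoint_frontier_excluded := by
    simp only [rootState, disjoint_filter]
    exact fun j _ h => not_le.2 h.2

namespace OnPathTo

theorem exists_mem_frontier_inter (h : OnPathTo G S σ) (hS : connSet G S) (hσS : ¬ S ⊆ σ.1) :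
    (σ.2.2 ∩ S).Nonempty := by
  obtain ⟨a, ha⟩ := h.current_nonempty
  obtain ⟨b, hbS, hbσ⟩ := not_subset.1 hσS
  obtain ⟨x, y, ⟨-, hyS, hxy⟩, hx, hy⟩ :=
    (hS.2 a (h.current_subset ha) b hbS).exists_boundary_step (p := (· ∈ σ.1)) ha hbσ
  have hy_excluded : y ∉ σ.2.1 := fun hy' => hy (h.inter_excluded_subset (mem_inter.2 ⟨hyS, hy'⟩))
  exact ⟨y, mem_inter.2 ⟨h.adj_mem_frontier x hx y hxy hy_excluded, hyS⟩⟩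

theorem notMem_current_of_mem_frontier (h : OnPathTo G S σ) {m : Fin n} (hm : m ∈ σ.2.2) :
    m ∉ σ.1 :=
  fun hm' => disjoint_left.1 h.disjoint_frontier_excluded hm (h.current_subset_excluded hm')

theorem step {m : Fin n} (h : OnPathTo G S σ) (hm : m ∈ σ.2.2) (hmS : m ∈ S)
    (hmin : ∀ j ∈ σ.2.2, j ∈ S → m ≤ j) : OnPathTo G S (stepState G σ m) where
  current_nonempty := insert_nonempty m σ.1
  current_subset := insert_subset hmS h.current_subset
  current_subset_excluded := insert_subset (by simp [stepState, hm])
    (h.current_subset_excluded.trans subset_union_left)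
  inter_excluded_subset j hj := by
    simp only [stepState, mem_inter, mem_union, mem_filter] at hj
    obtain ⟨hjS, hj | ⟨hjF, hjm⟩⟩ := hj
    · exact mem_insert_of_mem (h.inter_excluded_subset (mem_inter.2 ⟨hjS, hj⟩))
    · exact le_antisymm hjm (hmin j hjF hjS) ▸ mem_insert_self m σ.1
  adj_mem_frontier a ha j haj hj := by
    simp only [stepState, mem_union, mem_filter, not_or, not_and, not_le] at hj ⊢
    rcases mem_insert.1 ha with rfl | ha
    · exact Or.inr ⟨mem_univ j, haj, by simpa using hj⟩
    · have hjF := h.adj_mem_frontier a ha j haj hj.1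
      exact Or.inl ⟨hjF, hj.2 hjF⟩
  disjoint_frontier_excluded := by
    refine disjoint_union_left.2 ⟨disjoint_union_right.2 ⟨?_, ?_⟩,
      disjoint_left.2 fun j hj => (mem_filter.1 hj).2.2⟩
    · exact h.disjoint_frontier_excluded.mono_left (filter_subset _ _)
    · exact disjoint_left.2 fun j hj hj' => (mem_filter.1 hj).2.not_ge (mem_filter.1 hj').2

end OnPathTo

theorem exists_reachL_of_onPathTo (hS : connSet G S) (h : OnPathTo G S σ) :
    ∃ l τ, ReachL G σ l τ ∧ τ.1 = S := by
  induction hk : #(S \ σ.1) generalizing σ with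
  | zero =>
    exact ⟨[], σ, ReachL.refl σ,
      h.current_subset.antisymm (sdiff_eq_empty_iff_subset.1 (card_eq_zero.1 hk))⟩
  | succ k ih =>
    have hσS : ¬ S ⊆ σ.1 := fun hsub => by simp [sdiff_eq_empty_iff_subset.2 hsub] at hk
    have hne := h.exists_mem_frontier_inter hS hσS
    set m := (σ.2.2 ∩ S).min' hne
    obtain ⟨hmF, hmS⟩ := mem_inter.1 ((σ.2.2 ∩ S).min'_mem hne)
    have hm_missing : m ∈ S \ σ.1 := mem_sdiff.2 ⟨hmS, h.notMem_current_of_mem_frontier hmF⟩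
    have hk' : #(S \ (stepState G σ m).1) = k := by
      rw [show (stepState G σ m).1 = insert m σ.1 from rfl, sdiff_insert,
        card_erase_of_mem hm_missing, hk, Nat.add_sub_cancel]
    obtain ⟨l, τ, hreach, hτ⟩ := ih
      (h.step hmF hmS fun j hj hjS => (σ.2.2 ∩ S).min'_le j (mem_inter.2 ⟨hj, hjS⟩)) hk'
    exact ⟨m :: l, τ, ReachL.cons hmF hreach, hτ⟩

end FindConnectedSets

/-- Completeness of `FindConnectedSets`: every connected vertex set `S` with
minimum element `i` is built by some execution path of the recursion rooted at
`i`; hence the algorithm's output contains `S`. -/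
theorem findConnectedSets_complete {n : ℕ} (G : SimpleGraph (Fin n))
    [DecidableRel G.Adj] (S : Finset (Fin n)) (hS : connSet G S)
    (i : Fin n) (hi : i ∈ S) (hmin : ∀ j ∈ S, i ≤ j) :
    ∃ l τ, ReachL G (rootState G i) l τ ∧ τ.1 = S :=
  FindConnectedSets.exists_reachL_of_onPathTo hS (FindConnectedSets.onPathTo_rootState hi hmin)
end

section
/- Any finite partial order can be represented by labels of the form (r, s): for every finite strict partial order (P, ≺) there exists an assignment p ↦ (r_p, s_p) with r_p ∈ ℕ and s_p a finite set, such that for all p, q ∈ P: p ≺ q if and only if r_p < r_q and s_p ⊆ s_q. -/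
open Finset

theorem Finset.lt_iff_card_Iic_lt_and_Iic_subset {α : Type*} [PartialOrder α]
    [LocallyFiniteOrderBot α] {a b : α} :
    a < b ↔ #(Iic a) < #(Iic b) ∧ Iic a ⊆ Iic b := by
  rw [← Iic_ssubset_Iic]
  refine ⟨fun h => ⟨card_lt_card h, h.subset⟩, fun ⟨hcard, hsub⟩ => ?_⟩
  exact ssubset_of_subset_of_ne hsub fun h => hcard.ne (congrArg card h)

/-- Any finite strict partial order can be represented by labels `(r, s)` with
`r ∈ ℕ` and `s` a finite set, ordered by `(r_p, s_p) < (r_q, s_q) ↔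
r_p < r_q ∧ s_p ⊆ s_q`. -/
theorem finite_partial_order_labelable {P : Type*} [Fintype P]
    (r : P → P → Prop)
    (hirr : ∀ p, ¬ r p p)
    (htrans : ∀ p q s, r p q → r q s → r p s) :
    ∃ (ρ : P → ℕ) (s : P → Finset P),
      ∀ p q : P, r p q ↔ (ρ p < ρ q ∧ s p ⊆ s q) := by
  classical
  have : IsStrictOrder P r := { irrefl := hirr, trans := htrans }
  let _ := partialOrderOfSO r
  let _ := LocallyFiniteOrderBot.ofIic P (fun p => {x | x ≤ p}) (by simp)
  exact ⟨fun p => #(Iic p), Iic, fun p q => lt_iff_card_Iic_lt_and_Iic_subset (a := p) (b := q)⟩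
end

section
/- In the search tree of FindConnectedSets, distinct recursion branches produce distinct vertex sets: if two outputs of the algorithm arise from different paths in the recursion tree, then the output sets are different; in particular, at any recursion node, the subtrees obtained by extending with different frontier vertices i < i' generate disjoint families of sets, since every set in the subtree for i' excludes i while every set in the subtree for i contains i. -/
/-- One recursion step: extend with some frontier vertex. -/
def fcsStep {n : ℕ} (G : SimpleGraph (Fin n)) [DecidableRel G.Adj]
    (σ τ : FCSState n) : Prop :=
  ∃ i ∈ σ.2.2, τ = stepState G σ i

/-!
Each step keeps the current set inside the excluded set and the frontier outside it. Hence along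
any path of the recursion the current set only grows, while a vertex that is excluded but not
current stays so forever. Extending with `i'` puts every smaller frontier vertex `i` into that
position, so `i` belongs to every set below the branch of `i` and to no set below the branch of `i'`.
-/

structure FCSState.Admissible {n : ℕ} (σ : FCSState n) : Prop where
  current_subset_excluded : σ.1 ⊆ σ.2.1
  disjoint_frontier_excluded : Disjoint σ.2.2 σ.2.1

section StepState

variable {n : ℕ} (G : SimpleGraph (Fin n)) [DecidableRel G.Adj] {σ : FCSState n} {i : Fin n}

theorem FCSState.Admissible.notMem_excluded (hσ : σ.Admissible) (hi : i ∈ σ.2.2) :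
    i ∉ σ.2.1 :=
  Finset.disjoint_left.1 hσ.disjoint_frontier_excluded hi

theorem mem_stepState_fst : i ∈ (stepState G σ i).1 := Finset.mem_insert_self i σ.1

theorem subset_stepState_fst : σ.1 ⊆ (stepState G σ i).1 := Finset.subset_insert i σ.1

theorem FCSState.Admissible.step (hσ : σ.Admissible) (hi : i ∈ σ.2.2) :
    (stepState G σ i).Admissible := by
  refine ⟨Finset.insert_subset ?_ (hσ.current_subset_excluded.trans Finset.subset_union_left), ?_⟩
  · exact Finset.mem_union_right _ (Finset.mem_filter.2 ⟨hi, le_rfl⟩)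
  · rw [Finset.disjoint_left]
    intro j hj
    simp only [stepState, Finset.mem_union, Finset.mem_filter, Finset.mem_univ,
      true_and, not_or, not_and, not_le] at hj ⊢
    rcases hj with ⟨hj, hij⟩ | ⟨-, hj⟩
    · exact ⟨hσ.notMem_excluded hj, fun _ => hij⟩
    · exact hj

theorem FCSState.Admissible.excluded_sdiff_subset_stepState (hσ : σ.Admissible)
    (hi : i ∈ σ.2.2) : σ.2.1 \ σ.1 ⊆ (stepState G σ i).2.1 \ (stepState G σ i).1 := by
  intro j hj
  obtain ⟨hjV, hjS⟩ := Finset.mem_sdiff.1 hj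
  have hji : j ≠ i := fun h => hσ.notMem_excluded hi (h ▸ hjV)
  simp only [stepState, Finset.mem_sdiff, Finset.mem_union, Finset.mem_insert, not_or]
  exact ⟨Or.inl hjV, hji, hjS⟩

theorem FCSState.Admissible.mem_stepState_excluded_sdiff (hσ : σ.Admissible) {i' : Fin n}
    (hi : i ∈ σ.2.2) (hii' : i < i') :
    i ∈ (stepState G σ i').2.1 \ (stepState G σ i').1 := by
  have hiS : i ∉ σ.1 := fun h => hσ.notMem_excluded hi (hσ.current_subset_excluded h)
  simp only [stepState, Finset.mem_sdiff, Finset.mem_union, Finset.mem_filter,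
    Finset.mem_insert, not_or]
  exact ⟨Or.inr ⟨hi, hii'.le⟩, hii'.ne, hiS⟩

end StepState

theorem FCSState.Admissible.subset_and_disjoint_of_reflTransGen {n : ℕ}
    {G : SimpleGraph (Fin n)} [DecidableRel G.Adj] {σ τ : FCSState n} (hσ : σ.Admissible)
    (h : Relation.ReflTransGen (fcsStep G) σ τ) :
    σ.1 ⊆ τ.1 ∧ Disjoint (σ.2.1 \ σ.1) τ.1 := by
  induction h using Relation.ReflTransGen.head_induction_on with
  | refl => exact ⟨subset_rfl, disjoint_sdiff_self_left⟩
  | head hstep _ ih =>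
    obtain ⟨i, hi, rfl⟩ := hstep
    obtain ⟨hsub, hdisj⟩ := ih (hσ.step G hi)
    exact ⟨(subset_stepState_fst G).trans hsub,
      hdisj.mono_left (hσ.excluded_sdiff_subset_stepState G hi)⟩

/-- Distinct recursion branches of `FindConnectedSets` produce distinct sets.
Invariant: every set output in a subtree contains the subtree's current set
and avoids its excluded set (apart from the current set itself). Consequently,
extending a state with frontier vertices `i < i'` yields disjoint families:
sets in the subtree for `i` contain `i`, sets in the subtree for `i'` exclude `i`. -/
theorem findConnectedSets_branches_distinct {n : ℕ} (G : SimpleGraph (Fin n))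
    [DecidableRel G.Adj] :
    (∀ σ τ : FCSState n, σ.1 ⊆ σ.2.1 → Disjoint σ.2.2 σ.2.1 →
        Relation.ReflTransGen (fcsStep G) σ τ →
        σ.1 ⊆ τ.1 ∧ Disjoint (σ.2.1 \ σ.1) τ.1) ∧
    (∀ σ : FCSState n, σ.1 ⊆ σ.2.1 → Disjoint σ.2.2 σ.2.1 →
        ∀ i i' : Fin n, i ∈ σ.2.2 → i' ∈ σ.2.2 → i < i' →
        ∀ τ τ' : FCSState n,
          Relation.ReflTransGen (fcsStep G) (stepState G σ i) τ →
          Relation.ReflTransGen (fcsStep G) (stepState G σ i') τ' →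
          i ∈ τ.1 ∧ i ∉ τ'.1 ∧ τ.1 ≠ τ'.1) := by
  refine ⟨fun σ τ hS hD => FCSState.Admissible.subset_and_disjoint_of_reflTransGen ⟨hS, hD⟩, ?_⟩
  intro σ hS hD i i' hi hi' hii' τ τ' hτ hτ'
  have hσ : σ.Admissible := ⟨hS, hD⟩
  have hiτ : i ∈ τ.1 :=
    ((hσ.step G hi).subset_and_disjoint_of_reflTransGen hτ).1 (mem_stepState_fst G)
  have hiτ' : i ∉ τ'.1 := Finset.disjoint_left.1
    ((hσ.step G hi').subset_and_disjoint_of_reflTransGen hτ').2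
    (hσ.mem_stepState_excluded_sdiff G hi hii')
  exact ⟨hiτ, hiτ', fun h => hiτ' (h ▸ hiτ)⟩
end
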